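/- arXiv:1306.1679 — 2 statements merged into one kernel-verified Lean document; each statement's English description precedes it below -/
import Mathlib

section
/- Let f, g be pure (real part zero) quaternions with f² = g² = −1, and let h : (0,∞) × (0,2π) → ℍ be integrable with respect to dθ dr/r, with split parts h±(r,θ) = ½(h(r,θ) ± f h(r,θ) g). Then for all v ∈ ℝ and k ∈ ℤ: |h(r,θ)|² = |h₋(r,θ)|² + |h₊(r,θ)|² for all (r,θ), and |M{h}(v,k)|² = |M{h₋}(v,k)|² + |M{h₊}(v,k)|². -/
/-!
The map `σ x = f * x * g` is an isometry of `ℍ`, since `f ^ 2 = -1` forces `‖f‖ = 1` (and likewise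
for `g`); so the parallelogram law for `x` and `σ x` gives `‖x‖² = ‖x₋‖² + ‖x₊‖²`. Because `f` and
`g` commute with the exponential kernels, the transform commutes with `σ`, and on integrable signals
it is additive; hence `M{h±} = (M{h})±`, and the second identity is the first one applied to
`M{h}(v, k)`.
-/

open Quaternion MeasureTheory Real

/-- The measure `dθ dr/r` on `(0,∞) × (0,2π) ⊆ ℝ × ℝ`, first coordinate `r`,
second coordinate `θ`. -/
noncomputable def mellinMeasure : Measure (ℝ × ℝ) :=
  ((volume.restrict (Set.Ioi (0 : ℝ))).withDensity fun r => ENNReal.ofReal r⁻¹).prod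
    (volume.restrict (Set.Ioo (0 : ℝ) (2 * π)))

/-- The Clifford Fourier–Mellin transform of a quaternion-valued signal. -/
noncomputable def CFMT (f g : ℍ[ℝ]) (h : ℝ × ℝ → ℍ[ℝ]) (v : ℝ) (k : ℤ) : ℍ[ℝ] :=
  (2 * π)⁻¹ •
    ∫ p, NormedSpace.exp ((-(v * Real.log p.1)) • f) * h p *
      NormedSpace.exp ((-((k : ℝ) * p.2)) • g) ∂mellinMeasure

theorem continuous_exp_smul_const {𝕂 𝔸 : Type*} [RCLike 𝕂] [NormedRing 𝔸] [NormedAlgebra 𝕂 𝔸]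
    [CompleteSpace 𝔸] (x : 𝔸) : Continuous fun t : 𝕂 => NormedSpace.exp (t • x) :=
  continuous_iff_continuousAt.2 fun t => (hasDerivAt_exp_smul_const x t).continuousAt

namespace Quaternion

theorem norm_two : ‖(2 : ℍ[ℝ])‖ = 2 := by
  rw [← map_ofNat (algebraMap ℝ ℍ[ℝ]) 2, norm_algebraMap', Real.norm_ofNat]

theorem norm_eq_one_of_sq_eq_neg_one {q : ℍ[ℝ]} (hq : q ^ 2 = -1) : ‖q‖ = 1 := by
  have : ‖q‖ ^ 2 = 1 := by rw [← norm_pow, hq, norm_neg, norm_one]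
  exact (pow_eq_one_iff_of_nonneg (norm_nonneg q) two_ne_zero).1 this

theorem norm_exp_smul_of_re_eq_zero {q : ℍ[ℝ]} (hq : q.re = 0) (t : ℝ) :
    ‖NormedSpace.exp (t • q)‖ = 1 := by
  simp [hq]

theorem sq_norm_eq_sq_norm_half_sub_add_sq_norm_half_add {x y : ℍ[ℝ]} (h : ‖y‖ = ‖x‖) :
    ‖x‖ ^ 2 = ‖(x - y) / 2‖ ^ 2 + ‖(x + y) / 2‖ ^ 2 := by
  have := parallelogram_law_with_norm ℝ x y
  rw [h] at this
  rw [norm_div, norm_div, norm_two]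
  linear_combination -this / 4

end Quaternion

section Integral

variable {α : Type*} [MeasurableSpace α] {μ : Measure α}

theorem integral_const_mul₀ {𝕜 : Type*} [NormedDivisionRing 𝕜] [NormedAlgebra ℝ 𝕜] (c : 𝕜)
    (F : α → 𝕜) : ∫ x, c * F x ∂μ = c * ∫ x, F x ∂μ :=
  integral_smul c F

theorem integral_mul_const₀ {𝕜 : Type*} [NormedDivisionRing 𝕜] [NormedAlgebra ℝ 𝕜]
    [CompleteSpace 𝕜] (F : α → 𝕜) (c : 𝕜) : ∫ x, F x * c ∂μ = (∫ x, F x ∂μ) * c := by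
  rcases eq_or_ne c 0 with rfl | hc
  · simp
  by_cases hF : Integrable F μ
  · exact integral_mul_const_of_integrable hF
  · rw [integral_undef hF, integral_undef ((integrable_mul_const_iff hc.isUnit F).not.2 hF),
      zero_mul]

theorem MeasureTheory.Integrable.exp_smul_mul_mul_exp_smul {a b : ℍ[ℝ]} (ha : a.re = 0)
    (hb : b.re = 0) {φ ψ : α → ℝ} (hφ : AEStronglyMeasurable φ μ) (hψ : AEStronglyMeasurable ψ μ)
    {F : α → ℍ[ℝ]} (hF : Integrable F μ) :
    Integrable (fun x => NormedSpace.exp (φ x • a) * F x * NormedSpace.exp (ψ x • b)) μ := by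
  refine hF.norm.mono' ?_ (.of_forall fun x => ?_)
  · exact (((continuous_exp_smul_const a).comp_aestronglyMeasurable hφ).mul hF.1).mul
      ((continuous_exp_smul_const b).comp_aestronglyMeasurable hψ)
  · rw [norm_mul, norm_mul, Quaternion.norm_exp_smul_of_re_eq_zero ha,
      Quaternion.norm_exp_smul_of_re_eq_zero hb, one_mul, mul_one]

end Integral

section CFMT

variable {f g : ℍ[ℝ]} {h h₁ h₂ : ℝ × ℝ → ℍ[ℝ]} {v : ℝ} {k : ℤ}

theorem integrable_CFMT_integrand (hf : f.re = 0) (hg : g.re = 0)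
    (hh : Integrable h mellinMeasure) (v : ℝ) (k : ℤ) :
    Integrable (fun p => NormedSpace.exp ((-(v * Real.log p.1)) • f) * h p *
      NormedSpace.exp ((-((k : ℝ) * p.2)) • g)) mellinMeasure :=
  hh.exp_smul_mul_mul_exp_smul hf hg (measurable_fst.log.const_mul v).neg.aestronglyMeasurable
    (measurable_snd.const_mul (k : ℝ)).neg.aestronglyMeasurable

theorem CFMT_add (hf : f.re = 0) (hg : g.re = 0) (hh₁ : Integrable h₁ mellinMeasure)
    (hh₂ : Integrable h₂ mellinMeasure) :
    CFMT f g (fun p => h₁ p + h₂ p) v k = CFMT f g h₁ v k + CFMT f g h₂ v k := by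
  simp only [CFMT, mul_add, add_mul, ← smul_add,
    integral_add (integrable_CFMT_integrand hf hg hh₁ v k)
      (integrable_CFMT_integrand hf hg hh₂ v k)]

theorem CFMT_sub (hf : f.re = 0) (hg : g.re = 0) (hh₁ : Integrable h₁ mellinMeasure)
    (hh₂ : Integrable h₂ mellinMeasure) :
    CFMT f g (fun p => h₁ p - h₂ p) v k = CFMT f g h₁ v k - CFMT f g h₂ v k := by
  simp only [CFMT, mul_sub, sub_mul, ← smul_sub,
    integral_sub (integrable_CFMT_integrand hf hg hh₁ v k)
      (integrable_CFMT_integrand hf hg hh₂ v k)]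

theorem CFMT_mul_left {a : ℍ[ℝ]} (ha : Commute a f) :
    CFMT f g (fun p => a * h p) v k = a * CFMT f g h v k := by
  have hE (t : ℝ) : NormedSpace.exp (t • f) * a = a * NormedSpace.exp (t • f) :=
    ((ha.smul_right t).exp_right).eq.symm
  simp only [CFMT, ← mul_assoc, hE]
  simp only [mul_assoc, integral_const_mul₀, mul_smul_comm]

theorem CFMT_mul_right {b : ℍ[ℝ]} (hb : Commute b g) :
    CFMT f g (fun p => h p * b) v k = CFMT f g h v k * b := by
  have hE (t : ℝ) : b * NormedSpace.exp (t • g) = NormedSpace.exp (t • g) * b :=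
    ((hb.smul_right t).exp_right).eq
  simp only [CFMT, mul_assoc, hE, smul_mul_assoc]
  simp only [← mul_assoc, integral_mul_const₀]

theorem CFMT_div {c : ℍ[ℝ]} (hc : Commute c g) :
    CFMT f g (fun p => h p / c) v k = CFMT f g h v k / c := by
  simpa only [div_eq_mul_inv] using CFMT_mul_right hc.inv_left₀

end CFMT

theorem cfmt_modulus_identities (f g : ℍ[ℝ]) (hf : f ^ 2 = -1) (hg : g ^ 2 = -1)
    (hfre : f.re = 0) (hgre : g.re = 0)
    (h : ℝ × ℝ → ℍ[ℝ]) (hInt : Integrable h mellinMeasure) (v : ℝ) (k : ℤ) :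
    (∀ p : ℝ × ℝ, ‖h p‖ ^ 2 =
      ‖(h p - f * h p * g) / 2‖ ^ 2 + ‖(h p + f * h p * g) / 2‖ ^ 2) ∧
    ‖CFMT f g h v k‖ ^ 2 =
      ‖CFMT f g (fun p => (h p - f * h p * g) / 2) v k‖ ^ 2 +
      ‖CFMT f g (fun p => (h p + f * h p * g) / 2) v k‖ ^ 2 := by
  have hsplit (x : ℍ[ℝ]) :
      ‖x‖ ^ 2 = ‖(x - f * x * g) / 2‖ ^ 2 + ‖(x + f * x * g) / 2‖ ^ 2 := by
    refine Quaternion.sq_norm_eq_sq_norm_half_sub_add_sq_norm_half_add ?_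
    rw [norm_mul, norm_mul, Quaternion.norm_eq_one_of_sq_eq_neg_one hf,
      Quaternion.norm_eq_one_of_sq_eq_neg_one hg, one_mul, mul_one]
  refine ⟨fun p => hsplit (h p), ?_⟩
  have hσ : Integrable (fun p => f * h p * g) mellinMeasure := (hInt.const_mul f).mul_const g
  have h2 : Commute (2 : ℍ[ℝ]) g := Commute.ofNat_left 2 g
  rw [CFMT_div h2, CFMT_div h2, CFMT_sub hfre hgre hInt hσ, CFMT_add hfre hgre hInt hσ,
    CFMT_mul_right (Commute.refl g), CFMT_mul_left (Commute.refl f)]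
  exact hsplit _
end

section
/- Let f, g be quaternions with f² = g² = −1, let h : (0,∞) × ℝ → ℍ be 2π-periodic in its second argument and integrable over (0,∞) × (0,2π) with respect to dθ dr/r, let a > 0 and 0 ≤ φ ≤ 2π, and set m(r,θ) = h(ar, θ + φ). Then for all v ∈ ℝ and k ∈ ℤ: M{m}(v,k) = exp(f v ln a) · M{h}(v,k) · exp(g k φ). -/
open Quaternion MeasureTheory Real

/-!
The measure `dθ dr/r` is invariant under `(r, θ) ↦ (a r, θ + φ mod 2π)`. Substituting this map
into the transform of `h`, periodicity of `h` (and of `t ↦ exp (t • g)`, as `g² = -1`) removes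
the `mod 2π`, and since `t ↦ exp (t • f)` turns sums into products, the shifts
`log (a r) = log a + log r` and `θ + φ` split off the constant factors `a^{fv}` on the left and
`exp (g k φ)` on the right. The kernels have norm one, so the transformed integrand stays
integrable.
-/

open Set

namespace NormedSpace

variable {A : Type*} [NormedRing A] [NormedAlgebra ℝ A]

theorem exp_add_smul [CompleteSpace A] (x : A) (s t : ℝ) :
    exp ((s + t) • x) = exp (s • x) * exp (t • x) := by
  let +nondep : NormedAlgebra ℚ A := .restrictScalars ℚ ℝ A
  rw [add_smul, exp_add_of_commute (((Commute.refl x).smul_left s).smul_right t)]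

/-- Euler's formula: `g` spans a copy of `ℂ` in `A`, on which `exp` is the complex exponential. -/
theorem exp_smul_of_mul_self_eq_neg_one {g : A} (hg : g * g = -1) (t : ℝ) :
    exp (t • g) = algebraMap ℝ A (Real.cos t) + Real.sin t • g := by
  let +nondep : NormedAlgebra ℚ A := .restrictScalars ℚ ℝ A
  let L := Complex.liftAux g hg
  have hL : Continuous L := L.toLinearMap.continuous_of_finiteDimensional
  have hLt : L (t * Complex.I) = t • g := by simp [L, Complex.liftAux_apply]
  rw [← hLt, ← map_exp L hL, ← Complex.exp_eq_exp_ℂ, Complex.exp_mul_I]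
  simp [L, Complex.liftAux_apply, ← Complex.ofReal_cos, ← Complex.ofReal_sin]

theorem periodic_exp_smul_of_mul_self_eq_neg_one {g : A} (hg : g * g = -1) :
    Function.Periodic (fun t : ℝ => exp (t • g)) (2 * π) := by
  intro t
  simp only [exp_smul_of_mul_self_eq_neg_one hg, Real.cos_add_two_pi, Real.sin_add_two_pi]

end NormedSpace

namespace Quaternion

theorem re_eq_zero_of_sq_eq_neg_one {R : Type*} [CommRing R] [LinearOrder R]
    [IsStrictOrderedRing R] {q : ℍ[R]} (hq : q ^ 2 = -1) : q.re = 0 := by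
  have hnorm : normSq q = 1 := by
    have h := congrArg normSq hq
    rw [map_pow, normSq_neg, map_one] at h
    exact (pow_eq_one_iff_of_nonneg normSq_nonneg two_ne_zero).1 h
  rw [← sq_eq_neg_normSq, hq, hnorm, coe_one]

end Quaternion

theorem measurePreserving_toIocMod_add {T : ℝ} (hT : 0 < T) (t φ : ℝ) :
    MeasurePreserving (fun θ => toIocMod hT t (θ + φ))
      (volume.restrict (Ioc t (t + T))) (volume.restrict (Ioc t (t + T))) := by
  have : Fact (0 < T) := ⟨hT⟩
  have hshift : MeasurePreserving (· + φ)
      (volume.restrict (Ioc t (t + T))) (volume.restrict (Ioc (t + φ) (t + φ + T))) := by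
    simpa [add_right_comm] using
      (measurePreserving_add_right volume φ).restrict_preimage (s := Ioc (t + φ) (t + φ + T))
        measurableSet_Ioc
  -- `toIocMod` is the round trip `ℝ → AddCircle T ≃ Ioc t (t + T)`.
  have hcircle := (measurePreserving_subtype_coe measurableSet_Ioc).comp
    ((AddCircle.measurePreserving_equivIoc T (a := t)).comp
      ((AddCircle.measurePreserving_mk T (t + φ)).comp hshift))
  convert hcircle using 1
  ext θ
  simp only [Function.comp_apply, AddCircle.equivIoc, QuotientAddGroup.equivIocMod_coe]

noncomputable def mellinRadialMeasure : Measure ℝ :=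
  (volume.restrict (Ioi 0)).withDensity fun r => ENNReal.ofReal r⁻¹

instance : SFinite mellinRadialMeasure := by
  unfold mellinRadialMeasure
  infer_instance

theorem measurePreserving_const_mul_mellinRadialMeasure {a : ℝ} (ha : 0 < a) :
    MeasurePreserving (a * ·) mellinRadialMeasure mellinRadialMeasure := by
  have hmul : Measurable (a * ·) := measurable_const_mul a
  have hdens : Measurable fun r : ℝ => ENNReal.ofReal r⁻¹ := measurable_inv.ennreal_ofReal
  refine ⟨hmul, Measure.ext fun s hs => ?_⟩
  have hpre : (a * ·) ⁻¹' s ∩ Ioi 0 = (a * ·) ⁻¹' (s ∩ Ioi 0) := by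
    rw [preimage_inter, preimage_const_mul_Ioi₀ _ ha, zero_div]
  have hdens_mul (x : ℝ) :
      ENNReal.ofReal x⁻¹ = ENNReal.ofReal a * ENNReal.ofReal (a * x)⁻¹ := by
    rw [← ENNReal.ofReal_mul ha.le, mul_inv, ← mul_assoc, mul_inv_cancel₀ ha.ne', one_mul]
  rw [mellinRadialMeasure, Measure.map_apply hmul hs, withDensity_apply _ (hmul hs),
    withDensity_apply _ hs, Measure.restrict_restrict (hmul hs), Measure.restrict_restrict hs,
    hpre]
  calc ∫⁻ x in (a * ·) ⁻¹' (s ∩ Ioi 0), ENNReal.ofReal x⁻¹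
      = ENNReal.ofReal a * ∫⁻ x in (a * ·) ⁻¹' (s ∩ Ioi 0), ENNReal.ofReal (a * x)⁻¹ := by
        rw [← lintegral_const_mul' _ _ ENNReal.ofReal_ne_top]
        simp only [← hdens_mul]
    _ = ENNReal.ofReal a * ∫⁻ y in s ∩ Ioi 0, ENNReal.ofReal y⁻¹ ∂(volume.map (a * ·)) := by
        rw [setLIntegral_map (hs.inter measurableSet_Ioi) hdens hmul]
    _ = ∫⁻ y in s ∩ Ioi 0, ENNReal.ofReal y⁻¹ := by
        rw [Real.map_volume_mul_left ha.ne', Measure.restrict_smul, lintegral_smul_measure,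
          smul_eq_mul, ← mul_assoc, abs_of_pos (inv_pos.2 ha), ← ENNReal.ofReal_mul ha.le,
          mul_inv_cancel₀ ha.ne', ENNReal.ofReal_one, one_mul]

theorem mellinMeasure_eq_prod_Ioc :
    mellinMeasure = mellinRadialMeasure.prod (volume.restrict (Ioc 0 (0 + 2 * π))) := by
  rw [mellinMeasure, zero_add, Measure.restrict_congr_set Ioo_ae_eq_Ioc]
  rfl

theorem measurePreserving_mellinMeasure_scale_rotate {a : ℝ} (ha : 0 < a) (φ : ℝ) :
    MeasurePreserving (Prod.map (a * ·) fun θ => toIocMod two_pi_pos 0 (θ + φ))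
      mellinMeasure mellinMeasure := by
  rw [mellinMeasure_eq_prod_Ioc]
  exact (measurePreserving_const_mul_mellinRadialMeasure ha).prod
    (measurePreserving_toIocMod_add two_pi_pos 0 φ)

theorem ae_fst_pos_mellinMeasure : ∀ᵐ p ∂mellinMeasure, 0 < p.1 :=
  Measure.quasiMeasurePreserving_fst.ae <|
    (withDensity_absolutelyContinuous _ _).ae_le (ae_restrict_mem measurableSet_Ioi)

noncomputable def cfmtIntegrand (f g : ℍ[ℝ]) (h : ℝ × ℝ → ℍ[ℝ]) (v : ℝ) (k : ℤ)
    (p : ℝ × ℝ) : ℍ[ℝ] :=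
  NormedSpace.exp ((-(v * Real.log p.1)) • f) * h p * NormedSpace.exp ((-((k : ℝ) * p.2)) • g)

theorem CFMT_eq_integral_cfmtIntegrand (f g : ℍ[ℝ]) (h : ℝ × ℝ → ℍ[ℝ]) (v : ℝ) (k : ℤ) :
    CFMT f g h v k = (2 * π)⁻¹ • ∫ p, cfmtIntegrand f g h v k p ∂mellinMeasure :=
  rfl

theorem integrable_cfmtIntegrand {f g : ℍ[ℝ]} (hf : f.re = 0) (hg : g.re = 0)
    {h : ℝ × ℝ → ℍ[ℝ]} {μ : Measure (ℝ × ℝ)} (hh : Integrable h μ) (v : ℝ) (k : ℤ) :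
    Integrable (cfmtIntegrand f g h v k) μ := by
  have hexp : Continuous (NormedSpace.exp : ℍ[ℝ] → ℍ[ℝ]) := by
    let +nondep : NormedAlgebra ℚ ℍ := .restrictScalars ℚ ℝ ℍ
    exact NormedSpace.exp_continuous
  refine hh.norm.mono' ?_ (.of_forall fun p => ?_)
  · refine (hexp.comp_aestronglyMeasurable ?_).mul hh.1 |>.mul (hexp.comp_aestronglyMeasurable ?_)
    · exact (Measurable.aestronglyMeasurable (by fun_prop)).smul_const f
    · exact (Measurable.aestronglyMeasurable (by fun_prop)).smul_const g
  · simp [cfmtIntegrand, hf, hg]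

theorem cfmtIntegrand_scale_rotate {f g : ℍ[ℝ]} (hg : g * g = -1) {h : ℝ × ℝ → ℍ[ℝ]}
    (hper : ∀ r θ : ℝ, h (r, θ + 2 * π) = h (r, θ)) {a r : ℝ} (ha : 0 < a) (hr : 0 < r)
    (θ φ v : ℝ) (k n : ℤ) :
    cfmtIntegrand f g (fun p => h (a * p.1, p.2 + φ)) v k (r, θ) =
      NormedSpace.exp ((v * Real.log a) • f) *
        cfmtIntegrand f g h v k (a * r, θ + φ - n • (2 * π)) *
          NormedSpace.exp (((k : ℝ) * φ) • g) := by
  have hradial : NormedSpace.exp ((-(v * Real.log r)) • f) =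
      NormedSpace.exp ((v * Real.log a) • f) *
        NormedSpace.exp ((-(v * Real.log (a * r))) • f) := by
    rw [← NormedSpace.exp_add_smul, Real.log_mul ha.ne' hr.ne']
    ring_nf
  have hsignal : h (a * r, θ + φ) = h (a * r, θ + φ - n • (2 * π)) :=
    (Function.Periodic.sub_zsmul_eq (f := fun θ => h (a * r, θ)) (hper (a * r)) n).symm
  have hangular : NormedSpace.exp ((-((k : ℝ) * θ)) • g) =
      NormedSpace.exp ((-((k : ℝ) * (θ + φ - n • (2 * π)))) • g) *
        NormedSpace.exp (((k : ℝ) * φ) • g) := by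
    rw [← NormedSpace.exp_add_smul,
      ← (NormedSpace.periodic_exp_smul_of_mul_self_eq_neg_one hg).sub_zsmul_eq (-(k * n))]
    congr 2
    ring
  simp only [cfmtIntegrand, hradial, hsignal, hangular, mul_assoc]

theorem cfmt_scaling_rotation_general (f g : ℍ[ℝ]) (hf : f ^ 2 = -1) (hg : g ^ 2 = -1)
    (h : ℝ × ℝ → ℍ[ℝ]) (hper : ∀ r θ : ℝ, h (r, θ + 2 * π) = h (r, θ))
    (hInt : Integrable h mellinMeasure)
    (a : ℝ) (ha : 0 < a) (φ : ℝ) (v : ℝ) (k : ℤ) :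
    CFMT f g (fun p => h (a * p.1, p.2 + φ)) v k =
      NormedSpace.exp ((v * Real.log a) • f) * CFMT f g h v k *
        NormedSpace.exp (((k : ℝ) * φ) • g) := by
  set A := NormedSpace.exp ((v * Real.log a) • f)
  set B := NormedSpace.exp (((k : ℝ) * φ) • g)
  set G := cfmtIntegrand f g h v k
  set S : ℝ × ℝ → ℝ × ℝ := Prod.map (a * ·) fun θ => toIocMod two_pi_pos 0 (θ + φ)
  have hS : MeasurePreserving S mellinMeasure mellinMeasure :=
    measurePreserving_mellinMeasure_scale_rotate ha φ
  have hG : Integrable G mellinMeasure :=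
    integrable_cfmtIntegrand (re_eq_zero_of_sq_eq_neg_one hf) (re_eq_zero_of_sq_eq_neg_one hg)
      hInt v k
  have hGS : Integrable (fun p => G (S p)) mellinMeasure := (hS.integrable_comp hG.1).2 hG
  have hpointwise : cfmtIntegrand f g (fun p => h (a * p.1, p.2 + φ)) v k
      =ᵐ[mellinMeasure] fun p => A * G (S p) * B := by
    filter_upwards [ae_fst_pos_mellinMeasure] with p hp
    exact cfmtIntegrand_scale_rotate (pow_two g ▸ hg) hper ha hp p.2 φ v k _
  rw [CFMT_eq_integral_cfmtIntegrand, CFMT_eq_integral_cfmtIntegrand,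
    integral_congr_ae hpointwise, integral_mul_const_of_integrable (hGS.const_mul A),
    integral_const_mul_of_integrable hGS, ← integral_map hS.aemeasurable (hS.map_eq.symm ▸ hG.1),
    hS.map_eq, mul_smul_comm, smul_mul_assoc]

theorem cfmt_scaling_rotation (f g : ℍ[ℝ]) (hf : f ^ 2 = -1) (hg : g ^ 2 = -1)
    (h : ℝ × ℝ → ℍ[ℝ]) (hper : ∀ r θ : ℝ, h (r, θ + 2 * π) = h (r, θ))
    (hInt : Integrable h mellinMeasure)
    (a : ℝ) (ha : 0 < a) (φ : ℝ) (hφ : 0 ≤ φ ∧ φ ≤ 2 * π) (v : ℝ) (k : ℤ) :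
    CFMT f g (fun p => h (a * p.1, p.2 + φ)) v k =
      NormedSpace.exp ((v * Real.log a) • f) * CFMT f g h v k *
        NormedSpace.exp (((k : ℝ) * φ) • g) :=
  cfmt_scaling_rotation_general f g hf hg h hper hInt a ha φ v k
end
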